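/- Let α > 1, k > 1, and let B, D ≥ 0 be constants. Suppose (ξ_i)_{i≥-1} is a sequence of reals satisfying ξ_i ≤ B α^{-i} + D(1+i) α^{-i} + exp(α^{-i}/(k-1)) ξ_{i-1} for all i ≥ 0, with ξ_{-1} ≥ 0. Then for every i ≥ 0, ξ_i ≤ exp(1/((k-1)(α-1))) (B α/(α-1) + D α²/(α-1)²) + exp(α/((k-1)(α-1))) ξ_{-1}. -/

import Mathlib

/-!
With `u m = ξ (m - 1)`, unrolling `u (n + 1) ≤ b n + exp (c n) * u n` bounds `u (n + 1)` by the
sum of the `b j`, each amplified by at most `exp (c 1 + ⋯ + c n)`, plus `u 0` amplified by `exp (c 0 + ⋯ + c n)`.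
For `b n = (B + D (1 + n)) α⁻ⁿ` and `c n = α⁻ⁿ / (k - 1)` all three sums are geometric-type
series with explicit values, which give the constants of the theorem.
-/

open Finset Real

section Recursion

variable {u b c : ℕ → ℝ}

theorem le_exp_mul_sum_add_exp_mul_of_le_add_exp_mul (hb : ∀ n, 0 ≤ b n) (hc : ∀ n, 0 ≤ c n)
    (h : ∀ n, u (n + 1) ≤ b n + exp (c n) * u n) (n : ℕ) :
    u (n + 1) ≤ exp (∑ l ∈ range n, c (l + 1)) * ∑ j ∈ range (n + 1), b j
      + exp (∑ l ∈ range (n + 1), c l) * u 0 := by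
  induction n with
  | zero => simpa using h 0
  | succ n ih =>
    set S := ∑ l ∈ range n, c (l + 1)
    have hS : 1 ≤ exp (c (n + 1)) * exp S := by
      rw [← exp_add]
      exact one_le_exp (add_nonneg (hc _) (sum_nonneg fun l _ => hc (l + 1)))
    rw [sum_range_succ (fun l => c (l + 1)), sum_range_succ b, sum_range_succ c,
      add_comm _ (c (n + 1)), add_comm _ (c (n + 1)), exp_add, exp_add]
    calc u (n + 1 + 1) ≤ b (n + 1) + exp (c (n + 1)) * u (n + 1) := h (n + 1)
      _ ≤ exp (c (n + 1)) * exp S * b (n + 1) + exp (c (n + 1)) *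
            (exp S * ∑ j ∈ range (n + 1), b j + exp (∑ l ∈ range (n + 1), c l) * u 0) :=
          add_le_add (le_mul_of_one_le_left (hb _) hS)
            (mul_le_mul_of_nonneg_left ih (exp_pos _).le)
      _ = _ := by ring

theorem le_exp_mul_add_exp_mul_of_le_add_exp_mul {P S T : ℝ} (hb : ∀ n, 0 ≤ b n)
    (hc : ∀ n, 0 ≤ c n) (hP : HasSum b P) (hS : HasSum (fun n => c (n + 1)) S) (hT : HasSum c T)
    (hu : 0 ≤ u 0) (h : ∀ n, u (n + 1) ≤ b n + exp (c n) * u n) (n : ℕ) :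
    u (n + 1) ≤ exp S * P + exp T * u 0 :=
  (le_exp_mul_sum_add_exp_mul_of_le_add_exp_mul hb hc h n).trans <|
    add_le_add
      (mul_le_mul (exp_le_exp.mpr (sum_le_hasSum _ (fun l _ => hc (l + 1)) hS))
        (sum_le_hasSum _ (fun j _ => hb j) hP) (sum_nonneg fun j _ => hb j) (exp_pos _).le)
      (mul_le_mul_of_nonneg_right (exp_le_exp.mpr (sum_le_hasSum _ (fun l _ => hc l) hT)) hu)

end Recursion

section InvPow

variable {α : ℝ}

theorem hasSum_inv_pow (hα : 1 < α) : HasSum (fun n : ℕ => α⁻¹ ^ n) (α / (α - 1)) := by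
  have hα1 : α - 1 ≠ 0 := (sub_pos.mpr hα).ne'
  convert hasSum_geometric_of_lt_one (inv_pos.mpr (zero_lt_one.trans hα)).le
    (inv_lt_one_of_one_lt₀ hα) using 1
  field_simp

theorem hasSum_one_add_mul_inv_pow (hα : 1 < α) :
    HasSum (fun n : ℕ => (1 + n) * α⁻¹ ^ n) (α ^ 2 / (α - 1) ^ 2) := by
  have hnorm : ‖α⁻¹‖ < 1 := by
    rw [norm_inv, Real.norm_of_nonneg (zero_lt_one.trans hα).le]
    exact inv_lt_one_of_one_lt₀ hα
  have hsum : 1 / (1 - α⁻¹) ^ (1 + 1) = α ^ 2 / (α - 1) ^ 2 := by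
    have hα0 : α ≠ 0 := (zero_lt_one.trans hα).ne'
    rw [show 1 - α⁻¹ = (α - 1) / α by field_simp, one_div, ← inv_pow, inv_div, div_pow]
  simpa [hsum, add_comm] using hasSum_choose_mul_geometric_of_norm_lt_one 1 hnorm

end InvPow

theorem stmt_6 (α k B D : ℝ) (hα : 1 < α) (hk : 1 < k) (hB : 0 ≤ B) (hD : 0 ≤ D)
    (ξ : ℤ → ℝ) (hneg : 0 ≤ ξ (-1))
    (hrec : ∀ i : ℤ, 0 ≤ i →
      ξ i ≤ B * α ^ (-i) + D * (1 + (i : ℝ)) * α ^ (-i)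
        + Real.exp (α ^ (-i) / (k - 1)) * ξ (i - 1)) :
    ∀ i : ℤ, 0 ≤ i →
      ξ i ≤ Real.exp (1 / ((k - 1) * (α - 1))) * (B * α / (α - 1) + D * α ^ 2 / (α - 1) ^ 2)
        + Real.exp (α / ((k - 1) * (α - 1))) * ξ (-1) := by
  intro i hi
  lift i to ℕ using hi
  have hα0 : α ≠ 0 := (zero_lt_one.trans hα).ne'
  have hα1 : α - 1 ≠ 0 := (sub_pos.mpr hα).ne'
  have hk1 : 0 ≤ k - 1 := (sub_pos.mpr hk).le
  have hT : HasSum (fun n : ℕ => α⁻¹ ^ n / (k - 1)) (α / ((k - 1) * (α - 1))) := by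
    rw [mul_comm, ← div_div]
    exact (hasSum_inv_pow hα).div_const (k - 1)
  have hS : HasSum (fun n : ℕ => α⁻¹ ^ (n + 1) / (k - 1)) (1 / ((k - 1) * (α - 1))) := by
    have e : α⁻¹ * (α / (α - 1)) / (k - 1) = 1 / ((k - 1) * (α - 1)) := by field_simp
    simpa only [← pow_succ', e] using ((hasSum_inv_pow hα).mul_left α⁻¹).div_const (k - 1)
  have hP : HasSum (fun n : ℕ => B * α⁻¹ ^ n + D * (1 + n) * α⁻¹ ^ n)
      (B * α / (α - 1) + D * α ^ 2 / (α - 1) ^ 2) := by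
    simpa only [mul_assoc, mul_div_assoc] using
      ((hasSum_inv_pow hα).mul_left B).add ((hasSum_one_add_mul_inv_pow hα).mul_left D)
  have hpow (n : ℕ) : α ^ (-(n : ℤ)) = α⁻¹ ^ n := by rw [zpow_neg, zpow_natCast, inv_pow]
  have hu0 : 0 ≤ ξ (((0 : ℕ) : ℤ) - 1) := by simpa using hneg
  have hstep (n : ℕ) : ξ (((n + 1 : ℕ) : ℤ) - 1) ≤ (B * α⁻¹ ^ n + D * (1 + n) * α⁻¹ ^ n)
      + exp (α⁻¹ ^ n / (k - 1)) * ξ ((n : ℤ) - 1) := by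
    simpa [hpow] using hrec n n.cast_nonneg
  simpa using le_exp_mul_add_exp_mul_of_le_add_exp_mul (u := fun m : ℕ => ξ ((m : ℤ) - 1))
    (c := fun n : ℕ => α⁻¹ ^ n / (k - 1))
    (fun n => by positivity) (fun n => by positivity) hP hS hT hu0 hstep i
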